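/- arXiv:math/0201285 — 12 statements merged into one kernel-verified Lean document; each statement's English description precedes it below -/
import Mathlib

section
/- Every partial order on a nonempty finite set X is an intersection of at most |X| linear orders: if ≤ is a reflexive, transitive, antisymmetric relation on a nonempty finite set X, then there exist k ≤ |X| linear orders (reflexive, transitive, antisymmetric, total relations) L_1, …, L_k on X such that for all x, y ∈ X, x ≤ y holds if and only if x L_j y holds for every j ∈ {1, …, k}. -/
/-- Every partial order on a nonempty finite set `X` is an intersection of at
most `|X|` linear orders. -/
theorem stmt0 {X : Type*} [Fintype X] [Nonempty X]
    (le : X → X → Prop) (hrefl : Reflexive le) (htrans : Transitive le)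
    (hanti : AntiSymmetric le) :
    ∃ k, k ≤ Fintype.card X ∧ ∃ L : Fin k → X → X → Prop,
      (∀ j, Reflexive (L j) ∧ Transitive (L j) ∧ AntiSymmetric (L j) ∧ Total (L j)) ∧
      ∀ x y, le x y ↔ ∀ j, L j x y := by
  classical
  have key : ∀ a : X, ∃ s : X → X → Prop, IsLinearOrder X s ∧
      (∀ x y, le x y → s x y) ∧ (∀ y, ¬ le y a → ¬ le a y → s y a) := by
    intro a
    set R : X → X → Prop :=
      fun x y => le x y ∨ ∃ z, le x z ∧ ¬ le z a ∧ ¬ le a z ∧ le a y with hR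
    haveI : IsPartialOrder X R := by
      refine { refl := fun x => Or.inl (hrefl x), trans := ?_, antisymm := ?_ }
      · -- trans
        rintro x y z (hxy | ⟨w, hxw, hwa, haw, hay⟩) (hyz | ⟨v, hyv, hva, hav, haz⟩)
        · exact Or.inl (htrans hxy hyz)
        · exact Or.inr ⟨v, htrans hxy hyv, hva, hav, haz⟩
        · exact Or.inr ⟨w, hxw, hwa, haw, htrans hay hyz⟩
        · exact Or.inr ⟨w, hxw, hwa, haw, haz⟩
      · -- antisymm
        rintro x y (hxy | ⟨z, hxz, hza, haz, hay⟩) (hyx | ⟨w, hyw, hwa, haw, hax⟩)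
        · exact hanti hxy hyx
        · exact absurd (htrans (htrans hax hxy) hyw) haw
        · exact absurd (htrans (htrans hay hyx) hxz) haz
        · exact absurd (htrans hax hxz) haz
    obtain ⟨s, hs, hsub⟩ := extend_partialOrder R
    refine ⟨s, hs, fun x y h => hsub _ _ (Or.inl h), fun y h1 h2 =>
      hsub _ _ (Or.inr ⟨y, hrefl y, h1, h2, hrefl a⟩)⟩
  choose L hL hLle hLnew using key
  set e := Fintype.equivFin X with he
  refine ⟨Fintype.card X, le_rfl, fun j => L (e.symm j), ?_, ?_⟩
  · intro j
    haveI := hL (e.symm j)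
    exact ⟨fun x => refl_of (L (e.symm j)) x, fun _ _ _ h h' => _root_.trans_of _ h h',
      fun _ _ h h' => antisymm_of _ h h', fun x y => total_of _ x y⟩
  · intro x y
    constructor
    · intro h j
      exact hLle _ _ _ h
    · intro h
      by_contra hxy
      have hyx : L x y x := by
        by_cases hyx : le y x
        · exact hLle x y x hyx
        · exact hLnew x y hyx hxy
      have hx := h (e x)
      simp only [Equiv.symm_apply_apply] at hx
      haveI := hL x
      have : x = y := antisymm_of (L x) hx hyx
      exact hxy (this ▸ hrefl x)
end

section
/- Every quasi-order on a nonempty finite set X is an intersection of at most |X| total quasi-orders of the form (X×X) \ ((X\S)×S): if Q is a reflexive transitive relation on a nonempty finite set X, then there exist k ≤ |X| subsets S_1, …, S_k ⊆ X such that for all x, y ∈ X, x Q y holds if and only if for every j ∈ {1, …, k} it is not the case that x ∉ S_j and y ∈ S_j. -/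
/-- Every quasi-order on a nonempty finite set `X` is an intersection of at most
`|X|` total quasi-orders of the form `(X×X) \ ((X\S)×S)`. -/
theorem stmt1 {X : Type*} [Fintype X] [Nonempty X]
    (Q : X → X → Prop) (hrefl : Reflexive Q) (htrans : Transitive Q) :
    ∃ k, k ≤ Fintype.card X ∧ ∃ S : Fin k → Set X,
      ∀ x y, Q x y ↔ ∀ j, ¬ (x ∉ S j ∧ y ∈ S j) := by
  refine ⟨Fintype.card X, le_refl _, fun j => {a | Q a ((Fintype.equivFin X).symm j)}, ?_⟩
  intro x y
  constructor
  · rintro h j ⟨hx, hy⟩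
    exact hx (htrans h hy)
  · intro h
    have := h (Fintype.equivFin X y)
    simp only [Set.mem_setOf_eq, Equiv.symm_apply_apply] at this
    by_contra hxy
    exact this ⟨hxy, hrefl y⟩
end

section
/- Every chain of quasi-orders on a nonempty finite set has a common optimal element: if X is a nonempty finite set and Q_1 ⊆ Q_2 ⊆ … ⊆ Q_m is a chain of quasi-orders (reflexive transitive relations) on X, then there exists x ∈ X such that for every k ∈ {1, …, m} and every y ∈ X, y Q_k x implies x Q_k y. -/
/-- Every chain of quasi-orders on a nonempty finite set has a common optimal
element. -/
theorem stmt2 {X : Type*} [Fintype X] [Nonempty X] {m : ℕ}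
    (Q : Fin m → X → X → Prop)
    (hrefl : ∀ k, Reflexive (Q k)) (htrans : ∀ k, Transitive (Q k))
    (hchain : ∀ k l : Fin m, k ≤ l → ∀ a b, Q k a b → Q l a b) :
    ∃ x : X, ∀ (k : Fin m) (y : X), Q k y x → Q k x y := by
  classical
  set Lt : X → X → Prop := fun a b => ∃ k, Q k a b ∧ ¬ Q k b a with hLt
  have htr : IsTrans X Lt := by
    constructor
    rintro a b c ⟨k, hab, hnba⟩ ⟨l, hbc, hncb⟩
    rcases le_total k l with hkl | hlk
    · refine ⟨l, htrans l (hchain k l hkl a b hab) hbc, fun hca => ?_⟩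
      exact hncb (htrans l hca (hchain k l hkl a b hab))
    · refine ⟨k, htrans k hab (hchain l k hlk b c hbc), fun hca => ?_⟩
      exact hnba (htrans k (hchain l k hlk b c hbc) hca)
  have hirr : IsIrrefl X Lt := ⟨by rintro a ⟨k, hk, hnk⟩; exact hnk hk⟩
  have hwf : WellFounded Lt := Finite.wellFounded_of_trans_of_irrefl Lt
  obtain ⟨x, -, hx⟩ := hwf.has_min Set.univ Set.univ_nonempty
  refine ⟨x, fun k y hyx => ?_⟩
  by_contra hxy
  exact hx y trivial ⟨k, hyx, hxy⟩
end

section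
/- Let (R_i), i = 1,…,n, be a profile on a finite set X, let S ⊆ X, let 1/2 < α ≤ 1, and let x, y ∈ S be such that x R_i y for all i (i.e. r_{xy} = n). If y is tr_S(N_α)-optimal then x is tr_S(N_α)-optimal; if y is tr_S(N^S_α)-optimal then x is tr_S(N^S_α)-optimal; and if y is tr_S(D_α)-optimal then x is tr_S(D_α)-optimal. -/
namespace SC

variable {X : Type*}

/-- `r_{ab}`: the number of individuals `i` with `a R_i b`. -/
noncomputable def rr {n : ℕ} (R : Fin n → X → X → Prop) (a b : X) : ℕ :=
  Nat.card {i : Fin n // R i a b}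

/-- `p_{ab}`: the number of individuals `i` with `a P_i b` (strict preference). -/
noncomputable def pp {n : ℕ} (R : Fin n → X → X → Prop) (a b : X) : ℕ :=
  Nat.card {i : Fin n // R i a b ∧ ¬ R i b a}

/-- `e_{ab}`: the number of individuals `i` with `a E_i b` (equivalence). -/
noncomputable def ee {n : ℕ} (R : Fin n → X → X → Prop) (a b : X) : ℕ :=
  Nat.card {i : Fin n // R i a b ∧ R i b a}

/-- `u_{ab}`: the number of individuals `i` undecided about `a, b`. -/
noncomputable def uu {n : ℕ} (R : Fin n → X → X → Prop) (a b : X) : ℕ :=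
  Nat.card {i : Fin n // ¬ R i a b ∧ ¬ R i b a}

/-- `d_{ab} = p_{ab} + p_{ba} + e_{ab}`. -/
noncomputable def dd {n : ℕ} (R : Fin n → X → X → Prop) (a b : X) : ℕ :=
  pp R a b + pp R b a + ee R a b

/-- `d_S`: the number of individuals with some strict preference within `S`. -/
noncomputable def dS {n : ℕ} (R : Fin n → X → X → Prop) (S : Set X) : ℕ :=
  Nat.card {i : Fin n // ∃ a ∈ S, ∃ b ∈ S, R i a b ∧ ¬ R i b a}

/-- `x M_α y  :⟺  p_{xy} ≥ α n`. -/
def Mrel {n : ℕ} (R : Fin n → X → X → Prop) (α : ℝ) (a b : X) : Prop :=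
  (pp R a b : ℝ) ≥ α * (n : ℝ)

/-- `x N_α y  :⟺  r_{xy} ≥ α n`. -/
def Nrel {n : ℕ} (R : Fin n → X → X → Prop) (α : ℝ) (a b : X) : Prop :=
  (rr R a b : ℝ) ≥ α * (n : ℝ)

/-- `x M^S_α y  :⟺  p_{xy} ≥ α d_S > 0`. -/
def MSrel {n : ℕ} (R : Fin n → X → X → Prop) (α : ℝ) (S : Set X) (a b : X) : Prop :=
  (pp R a b : ℝ) ≥ α * (dS R S : ℝ) ∧ 0 < α * (dS R S : ℝ)

/-- `x N^S_α y  :⟺  r_{xy} ≥ α d_S > 0`. -/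
def NSrel {n : ℕ} (R : Fin n → X → X → Prop) (α : ℝ) (S : Set X) (a b : X) : Prop :=
  (rr R a b : ℝ) ≥ α * (dS R S : ℝ) ∧ 0 < α * (dS R S : ℝ)

/-- `x B_α y  :⟺  p_{xy} ≥ α d_{xy} > 0`. -/
def Brel {n : ℕ} (R : Fin n → X → X → Prop) (α : ℝ) (a b : X) : Prop :=
  (pp R a b : ℝ) ≥ α * (dd R a b : ℝ) ∧ 0 < α * (dd R a b : ℝ)

/-- `x D_α y  :⟺  r_{xy} ≥ α d_{xy} > 0`. -/
def Drel {n : ℕ} (R : Fin n → X → X → Prop) (α : ℝ) (a b : X) : Prop :=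
  (rr R a b : ℝ) ≥ α * (dd R a b : ℝ) ∧ 0 < α * (dd R a b : ℝ)

/-- `x P_α y  :⟺  p_{xy} ≥ α (p_{xy} + p_{yx}) > 0`. -/
def Prel {n : ℕ} (R : Fin n → X → X → Prop) (α : ℝ) (a b : X) : Prop :=
  (pp R a b : ℝ) ≥ α * ((pp R a b : ℝ) + (pp R b a : ℝ)) ∧
    0 < α * ((pp R a b : ℝ) + (pp R b a : ℝ))

/-- `x R_α y  :⟺  r_{xy} ≥ α (r_{xy} + r_{yx})` and `p_{xy} > 0`. -/
def Rrel {n : ℕ} (R : Fin n → X → X → Prop) (α : ℝ) (a b : X) : Prop :=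
  (rr R a b : ℝ) ≥ α * ((rr R a b : ℝ) + (rr R b a : ℝ)) ∧ 0 < pp R a b

/-- `x U_α y  :⟺  p_{xy} > p_{yx}` and `p_{xy} + u_{xy} ≥ α n`. -/
def Urel {n : ℕ} (R : Fin n → X → X → Prop) (α : ℝ) (a b : X) : Prop :=
  pp R b a < pp R a b ∧ ((pp R a b : ℝ) + (uu R a b : ℝ)) ≥ α * (n : ℝ)

/-- `x E_α y  :⟺  p_{xy} > p_{yx}` and `p_{xy} + e_{xy} ≥ α d_{xy}`. -/
def Erel {n : ℕ} (R : Fin n → X → X → Prop) (α : ℝ) (a b : X) : Prop :=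
  pp R b a < pp R a b ∧ ((pp R a b : ℝ) + (ee R a b : ℝ)) ≥ α * (dd R a b : ℝ)

/-- `tr_S(A)`: the reflexive-transitive hull of the restriction of `A` to `S`. -/
def trS (S : Set X) (A : X → X → Prop) : X → X → Prop :=
  Relation.ReflTransGen (fun a b => a ∈ S ∧ b ∈ S ∧ A a b)

/-- `x` is `tr_S(A)`-optimal. -/
def optimalIn (S : Set X) (A : X → X → Prop) (x : X) : Prop :=
  ∀ y ∈ S, trS S A y x → trS S A x y

end SC

namespace SC

lemma step_opt {X : Type*} {S : Set X} {A : X → X → Prop} {x y : X}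
    (hx : x ∈ S) (hy : y ∈ S) (hAxy : A x y)
    (hopt : optimalIn S A y) : optimalIn S A x := by
  intro z hz htr
  have h1 : trS S A x y := Relation.ReflTransGen.single ⟨hx, hy, hAxy⟩
  exact h1.trans (hopt z hz (htr.trans h1))

lemma opt_of_empty {X : Type*} {S : Set X} {A : X → X → Prop}
    (h : ∀ a b, ¬ A a b) (x : X) : optimalIn S A x := by
  intro z hz htr
  rcases (Relation.ReflTransGen.cases_head htr) with rfl | ⟨c, hc, _⟩
  · exact Relation.ReflTransGen.refl
  · exact absurd hc.2.2 (h _ _)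

open Classical in
lemma rr_eq_n {X : Type*} {n : ℕ} {R : Fin n → X → X → Prop} {x y : X}
    (hxy : ∀ i, R i x y) : rr R x y = n := by
  rw [rr, Nat.card_eq_fintype_card, Fintype.card_subtype]
  simp [hxy]

open Classical in
lemma dd_eq_n {X : Type*} {n : ℕ} {R : Fin n → X → X → Prop} {x y : X}
    (hxy : ∀ i, R i x y) : dd R x y = n := by
  have hp : pp R y x = 0 := by
    rw [pp, Nat.card_eq_fintype_card, Fintype.card_subtype]
    simp [hxy]
  rw [dd, hp, pp, ee, Nat.card_eq_fintype_card, Nat.card_eq_fintype_card,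
    Fintype.card_subtype, Fintype.card_subtype]
  have := Finset.card_filter_add_card_filter_not
    (s := (Finset.univ : Finset (Fin n))) (p := fun i => R i y x)
  simp only [hxy, true_and, Finset.card_univ, Fintype.card_fin] at this ⊢
  omega

lemma dS_le_n {X : Type*} {n : ℕ} (R : Fin n → X → X → Prop) (S : Set X) :
    dS R S ≤ n := by
  have := Nat.card_le_card_of_injective
    (Subtype.val : {i : Fin n // ∃ a ∈ S, ∃ b ∈ S, R i a b ∧ ¬ R i b a} → Fin n)
    Subtype.val_injective
  simpa [dS] using this

end SC

open SC in
/-- if `x R_i y` for all `i` and `y` is `tr_S(A_α)`-optimal for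
`A ∈ {N, N^S, D}`, then so is `x`. -/
theorem stmt3 {X : Type*} [Fintype X] {n : ℕ} (hn : 1 ≤ n)
    (R : Fin n → X → X → Prop) (hrefl : ∀ i, Reflexive (R i))
    (S : Set X) (α : ℝ) (hα : 1 / 2 < α) (hα1 : α ≤ 1)
    (x y : X) (hx : x ∈ S) (hy : y ∈ S) (hxy : ∀ i, R i x y) :
    (optimalIn S (Nrel R α) y → optimalIn S (Nrel R α) x) ∧
    (optimalIn S (NSrel R α S) y → optimalIn S (NSrel R α S) x) ∧
    (optimalIn S (Drel R α) y → optimalIn S (Drel R α) x) := by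
  have hrr : rr R x y = n := rr_eq_n hxy
  have hdd : dd R x y = n := dd_eq_n hxy
  have hα0 : (0:ℝ) < α := lt_trans (by norm_num) hα
  have hαn : α * (n:ℝ) ≤ n := by
    have : (1:ℝ) ≤ n := by exact_mod_cast hn
    nlinarith
  refine ⟨?_, ?_, ?_⟩
  · refine fun h => step_opt hx hy ?_ h
    unfold Nrel
    rw [hrr]; exact hαn
  · intro h
    by_cases hd : dS R S = 0
    · exact opt_of_empty (fun a b hab => by simp [NSrel, hd] at hab) x
    · refine step_opt hx hy ?_ h
      have hdn : (dS R S : ℝ) ≤ n := Nat.cast_le.mpr (dS_le_n R S)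
      have hd0 : (0:ℝ) < dS R S := by positivity
      refine ⟨?_, by positivity⟩
      rw [hrr]
      nlinarith
  · refine fun h => step_opt hx hy ?_ h
    have hn0 : (0:ℝ) < n := by exact_mod_cast hn
    refine ⟨?_, ?_⟩ <;> rw [hdd]
    · rw [hrr]; exact hαn
    · positivity
end

section
/- Let (R_i), i = 1,…,n, be a profile on a finite set X such that R_i P_i R_i ⊆ P_i for every i (i.e. whenever a R_i b, b P_i c and c R_i d, then a P_i d). Let S ⊆ X, let 1/2 < α ≤ 1, and let x, y ∈ S be such that x R_i y for all i. If y is tr_S(M_α)-optimal then x is tr_S(M_α)-optimal; if y is tr_S(M^S_α)-optimal then x is tr_S(M^S_α)-optimal; and if y is tr_S(P_α)-optimal then x is tr_S(P_α)-optimal. -/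
section Aux
open SC

private lemma card_mono {n : ℕ} {p q : Fin n → Prop} (h : ∀ i, p i → q i) :
    Nat.card {i : Fin n // p i} ≤ Nat.card {i : Fin n // q i} :=
  Nat.card_le_card_of_injective (fun a => ⟨a.1, h a.1 a.2⟩)
    (fun a b hab => by simpa [Subtype.ext_iff] using hab)

private lemma key_transfer {X : Type*} (S : Set X) (A : X → X → Prop) (x y : X)
    (hx : x ∈ S) (hy : y ∈ S)
    (h1 : ∀ a, A a x → A a y) (h2 : ∀ b, A y b → A x b) (h3 : ¬ A y x)
    (hopt : optimalIn S A y) : optimalIn S A x := by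
  have L : ∀ z, trS S A z x → z = x ∨ trS S A z y := by
    intro z h
    rcases h.cases_tail with h' | ⟨c, hzc, hcx⟩
    · exact Or.inl h'.symm
    · exact Or.inr (hzc.tail ⟨hcx.1, hy, h1 c hcx.2.2⟩)
  intro z hz hzx
  rcases L z hzx with rfl | hzy
  · exact Relation.ReflTransGen.refl
  · have hyz := hopt z hz hzy
    rcases hyz.cases_head with rfl | ⟨c, hstep, hcz⟩
    · -- z = y ; goal : trS S A x y, have hzx : trS S A y x
      rcases hzx.cases_head with h' | ⟨c, hstep, hcx⟩
      · exact h' ▸ Relation.ReflTransGen.refl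
      · rcases L c hcx with rfl | hcy
        · exact absurd hstep.2.2 h3
        · exact Relation.ReflTransGen.head ⟨hx, hstep.2.1, h2 c hstep.2.2⟩ hcy
    · exact Relation.ReflTransGen.head ⟨hx, hstep.2.1, h2 c hstep.2.2⟩ hcz

private lemma prel_arith {α p q p' q' : ℝ} (hα1 : α ≤ 1)
    (hpp : p ≤ p') (hqq : q' ≤ q) (h1 : p ≥ α * (p + q)) (h2 : 0 < α * (p + q))
    (hq'0 : 0 ≤ q') :
    p' ≥ α * (p' + q') ∧ 0 < α * (p' + q') := by
  have hα0 : 0 < α := by nlinarith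
  constructor
  · nlinarith
  · nlinarith

end Aux

open SC in
/-- if `R_i P_i R_i ⊆ P_i` for all `i`, `x R_i y` for all `i`, and `y` is
`tr_S(A_α)`-optimal for `A ∈ {M, M^S, P}`, then so is `x`. -/
theorem stmt4 {X : Type*} [Fintype X] {n : ℕ} (hn : 1 ≤ n)
    (R : Fin n → X → X → Prop) (hrefl : ∀ i, Reflexive (R i))
    (hRPR : ∀ (i : Fin n) (a b c d : X),
      R i a b → (R i b c ∧ ¬ R i c b) → R i c d → (R i a d ∧ ¬ R i d a))
    (S : Set X) (α : ℝ) (hα : 1 / 2 < α) (hα1 : α ≤ 1)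
    (x y : X) (hx : x ∈ S) (hy : y ∈ S) (hxy : ∀ i, R i x y) :
    (optimalIn S (Mrel R α) y → optimalIn S (Mrel R α) x) ∧
    (optimalIn S (MSrel R α S) y → optimalIn S (MSrel R α S) x) ∧
    (optimalIn S (Prel R α) y → optimalIn S (Prel R α) x) := by
  classical
  -- basic cardinality facts
  have hax : ∀ a, pp R a x ≤ pp R a y := by
    intro a
    exact card_mono (fun i hi => hRPR i a a x y (hrefl i a) hi (hxy i))
  have hya : ∀ a, pp R y a ≤ pp R x a := by
    intro a
    exact card_mono (fun i hi => hRPR i x y a a (hxy i) hi (hrefl i a))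
  have hyx0 : pp R y x = 0 := by
    have : IsEmpty {i : Fin n // R i y x ∧ ¬ R i x y} :=
      ⟨fun j => j.2.2 (hxy j.1)⟩
    exact Nat.card_of_isEmpty
  have hα0 : (0:ℝ) < α := by nlinarith
  have hn' : (1:ℝ) ≤ (n:ℝ) := by exact_mod_cast hn
  refine ⟨?_, ?_, ?_⟩
  · refine key_transfer S _ x y hx hy ?_ ?_ ?_
    · intro a h
      exact le_trans h (by exact_mod_cast hax a)
    · intro b h
      exact le_trans h (by exact_mod_cast hya b)
    · intro h
      unfold Mrel at h
      rw [hyx0] at h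
      push_cast at h
      nlinarith
  · refine key_transfer S _ x y hx hy ?_ ?_ ?_
    · intro a h
      exact ⟨le_trans h.1 (by exact_mod_cast hax a), h.2⟩
    · intro b h
      exact ⟨le_trans h.1 (by exact_mod_cast hya b), h.2⟩
    · intro h
      obtain ⟨h1, h2⟩ := h
      rw [hyx0] at h1
      push_cast at h1
      nlinarith
  · refine key_transfer S _ x y hx hy ?_ ?_ ?_
    · intro a h
      exact prel_arith hα1 (by exact_mod_cast hax a) (by exact_mod_cast hya a)
        h.1 h.2 (by positivity)
    · intro b h
      exact prel_arith hα1 (by exact_mod_cast hya b) (by exact_mod_cast hax b)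
        h.1 h.2 (by positivity)
    · intro h
      obtain ⟨h1, h2⟩ := h
      rw [hyx0] at h1 h2
      push_cast at h1 h2
      nlinarith
end

section
/- Let X be a finite set, C a choice function on X, and A a binary relation on X. Define the (C)-modification C^(C) by: C^(C)(S) = {x} if there is x ∈ S with C({x,y}) = {x} for all y ∈ S (such an x is unique if it exists), and C^(C)(S) = C(S) otherwise. Then C^(C) is again a choice function, and: if C satisfies (wIm_A) then C^(C) satisfies (wIm_A), and if C satisfies (Im_A) then C^(C) satisfies (Im_A). -/
namespace SC

variable {X : Type*}

/-- `C` is a choice function: it assigns to each nonempty `S` a nonempty subset of `S`. -/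
def IsChoice (C : Set X → Set X) : Prop :=
  ∀ S : Set X, S.Nonempty → (C S).Nonempty ∧ C S ⊆ S

/-- Condition (wIm_A): weak immunity from `A`-arguments. -/
def wIm (C : Set X → Set X) (A : X → X → Prop) : Prop :=
  ∀ S : Set X, S.Nonempty → ∀ x ∈ C S, ∀ y ∈ S, y ≠ x → A y x →
    ∃ z ∈ S, z ≠ y ∧ A z y

/-- Condition (Im_A): immunity from `A`-arguments. -/
def Im (C : Set X → Set X) (A : X → X → Prop) : Prop :=
  ∀ S : Set X, S.Nonempty → ∀ x ∈ C S, ∀ y ∈ S, A y x → trS S A x y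

open Classical in
/-- The (C)-modification `C^(C)` of a choice function `C`: it returns `{x}` if `x ∈ S` is
such that `C({x,y}) = {x}` for all `y ∈ S` (such an `x` is unique if it exists), and
`C(S)` otherwise. -/
noncomputable def Cmod (C : Set X → Set X) (S : Set X) : Set X :=
  if h : ∃ x, x ∈ S ∧ ∀ y ∈ S, C {x, y} = {x} then {h.choose} else C S

theorem Cmod_eq_or_exists_singleton (C : Set X → Set X) (S : Set X) :
    Cmod C S = C S ∨ ∃ x ∈ S, (∀ y ∈ S, C {x, y} = {x}) ∧ Cmod C S = {x} := by
  unfold Cmod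
  split_ifs with h
  · exact .inr ⟨h.choose, h.choose_spec.1, h.choose_spec.2, rfl⟩
  · exact .inl rfl

variable {C : Set X → Set X} {A : X → X → Prop}

theorem trS_mono {S T : Set X} (hST : S ⊆ T) {a b : X} (h : trS S A a b) : trS T A a b :=
  Relation.ReflTransGen.mono (fun _ _ ⟨ha, hb, hab⟩ => ⟨hST ha, hST hb, hab⟩) _ _ h

theorem IsChoice.cmod (hC : IsChoice C) : IsChoice (Cmod C) := by
  intro S hS
  rcases Cmod_eq_or_exists_singleton C S with hCS | ⟨x, hxS, -, hCS⟩
  · exact hCS ▸ hC S hS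
  · rw [hCS]
    exact ⟨Set.singleton_nonempty x, Set.singleton_subset_iff.2 hxS⟩

/- In the singleton case `x` beats `y` in the pair `{x, y} ⊆ S`, so the condition for `C`
on that pair yields the one for `C^(C)` on `S`; the same argument proves `Im.cmod`. -/
theorem wIm.cmod (hw : wIm C A) : wIm (Cmod C) A := by
  intro S hS x hx y hyS hne hA
  rcases Cmod_eq_or_exists_singleton C S with hCS | ⟨w, hwS, hwins, hCS⟩
  · exact hw S hS x (hCS ▸ hx) y hyS hne hA
  · obtain rfl : x = w := by rwa [hCS] at hx
    have hxC : x ∈ C {x, y} := by rw [hwins y hyS]; rfl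
    obtain ⟨z, rfl | rfl, hzy, hAzy⟩ :=
      hw {x, y} (Set.insert_nonempty x {y}) x hxC y (by simp) hne hA
    · exact ⟨z, hwS, hzy, hAzy⟩
    · exact absurd rfl hzy

theorem Im.cmod (hi : Im C A) : Im (Cmod C) A := by
  intro S hS x hx y hyS hA
  rcases Cmod_eq_or_exists_singleton C S with hCS | ⟨w, hwS, hwins, hCS⟩
  · exact hi S hS x (hCS ▸ hx) y hyS hA
  · obtain rfl : x = w := by rwa [hCS] at hx
    have hxC : x ∈ C {x, y} := by rw [hwins y hyS]; rfl
    exact trS_mono (Set.insert_subset hwS (Set.singleton_subset_iff.2 hyS))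
      (hi {x, y} (Set.insert_nonempty x {y}) x hxC y (by simp) hA)

end SC

open SC in
theorem stmt6_general {X : Type*} (C : Set X → Set X) (A : X → X → Prop)
    (hC : IsChoice C) :
    IsChoice (Cmod C) ∧ (wIm C A → wIm (Cmod C) A) ∧ (Im C A → Im (Cmod C) A) :=
  ⟨hC.cmod, wIm.cmod, Im.cmod⟩

open SC in
/-- the (C)-modification of a choice function is a choice function and
preserves (wIm_A) and (Im_A). -/
theorem stmt6 {X : Type*} [Fintype X] (C : Set X → Set X) (A : X → X → Prop)
    (hC : IsChoice C) :
    IsChoice (Cmod C) ∧ (wIm C A → wIm (Cmod C) A) ∧ (Im C A → Im (Cmod C) A) :=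
  stmt6_general C A hC
end

section
/- Let (R_i), i = 1,…,n, be a profile on a finite set X and let α be a real number with 1/2 < α ≤ n/(2n−1). Then for all x, y ∈ X the following are equivalent: (a) x R_α y; (b) p_{xy} > 0 and r_{xy} > r_{yx}; (c) p_{xy} > p_{yx}; (d) x P_α y. In particular, R_α = P_α for all such α. -/
/-- The `1/2 < α ≤ n / (2n - 1)` window: since `t ↦ t / (2t - 1)` decreases, a strict majority
`b < a ≤ n` always has `α ≤ n / (2n - 1) ≤ a / (2a - 1) ≤ a / (a + b)`. -/
theorem mul_add_le_iff_lt {a b n : ℕ} {α : ℝ} (hα : 1 / 2 < α)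
    (hαn : α ≤ n / (2 * n - 1)) (ha : a ≤ n) (hab : 0 < a + b) :
    α * (a + b) ≤ a ↔ b < a := by
  have hab' : (0 : ℝ) < a + b := by exact_mod_cast hab
  constructor
  · intro h
    exact_mod_cast (show (b : ℝ) < a by nlinarith)
  · intro h
    have hn : (1 : ℝ) ≤ n := by exact_mod_cast (show 1 ≤ n by omega)
    have hαn' : α * (2 * n - 1) ≤ n := (le_div_iff₀ (by linarith)).1 hαn
    have hba : (b : ℝ) + 1 ≤ a := by exact_mod_cast h
    have han : (a : ℝ) ≤ n := by exact_mod_cast ha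
    nlinarith [mul_nonneg (by linarith : (0 : ℝ) ≤ 2 * α - 1) (by linarith : (0 : ℝ) ≤ n - a)]

namespace SC

variable {X : Type*} {n : ℕ} (R : Fin n → X → X → Prop)

theorem ee_comm (a b : X) : ee R a b = ee R b a :=
  Nat.card_congr (Equiv.subtypeEquivRight fun _ => and_comm)

theorem rr_eq_pp_add_ee (a b : X) : rr R a b = pp R a b + ee R a b := by
  classical
  simp only [rr, pp, ee, Nat.card_eq_fintype_card, Fintype.card_subtype, Finset.card_filter,
    ← Finset.sum_add_distrib]
  refine Finset.sum_congr rfl fun i _ => ?_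
  by_cases h₁ : R i a b <;> by_cases h₂ : R i b a <;> simp [h₁, h₂]

theorem rr_add_pp_eq_rr_add_pp (a b : X) : rr R a b + pp R b a = rr R b a + pp R a b := by
  rw [rr_eq_pp_add_ee, rr_eq_pp_add_ee, ee_comm R b a]
  ring

theorem rr_le (a b : X) : rr R a b ≤ n :=
  (Finite.card_subtype_le _).trans_eq (Nat.card_eq_fintype_card.trans (Fintype.card_fin n))

theorem pp_le (a b : X) : pp R a b ≤ n := by
  have := rr_le R a b
  rw [rr_eq_pp_add_ee] at this
  omega

theorem pos_and_rr_lt_iff_pp_lt (a b : X) :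
    (0 < pp R a b ∧ rr R b a < rr R a b) ↔ pp R b a < pp R a b := by
  have := rr_add_pp_eq_rr_add_pp R a b
  omega

variable {α : ℝ}

theorem rrel_iff_pos_and_rr_lt (hα : 1 / 2 < α) (hαn : α ≤ n / (2 * n - 1)) (a b : X) :
    Rrel R α a b ↔ 0 < pp R a b ∧ rr R b a < rr R a b := by
  rw [Rrel, and_comm]
  refine and_congr_right fun hp => ?_
  have hpos : 0 < rr R a b + rr R b a := by
    have := rr_eq_pp_add_ee R a b
    omega
  exact mul_add_le_iff_lt hα hαn (rr_le R a b) hpos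

theorem prel_iff_pp_lt (hα : 1 / 2 < α) (hαn : α ≤ n / (2 * n - 1)) (a b : X) :
    Prel R α a b ↔ pp R b a < pp R a b := by
  have hα0 : 0 < α := by linarith
  constructor
  · rintro ⟨hle, hpos⟩
    have hsum : 0 < pp R a b + pp R b a := by exact_mod_cast pos_of_mul_pos_right hpos hα0.le
    exact (mul_add_le_iff_lt hα hαn (pp_le R a b) hsum).1 hle
  · intro hlt
    have hsum : 0 < pp R a b + pp R b a := by omega
    refine ⟨(mul_add_le_iff_lt hα hαn (pp_le R a b) hsum).2 hlt, ?_⟩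
    exact mul_pos hα0 (by exact_mod_cast hsum)

end SC

open SC in
theorem stmt10_general {X : Type*} {n : ℕ}
    (R : Fin n → X → X → Prop)
    (α : ℝ) (hα : 1 / 2 < α) (hα2 : α ≤ (n : ℝ) / (2 * (n : ℝ) - 1))
    (x y : X) :
    (Rrel R α x y ↔ (0 < pp R x y ∧ rr R y x < rr R x y)) ∧
    ((0 < pp R x y ∧ rr R y x < rr R x y) ↔ pp R y x < pp R x y) ∧
    ((pp R y x < pp R x y) ↔ Prel R α x y) ∧
    (Rrel R α x y ↔ Prel R α x y) := by
  have hR := rrel_iff_pos_and_rr_lt R hα hα2 x y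
  have hB := pos_and_rr_lt_iff_pp_lt R x y
  have hP := (prel_iff_pp_lt R hα hα2 x y).symm
  exact ⟨hR, hB, hP, hR.trans (hB.trans hP)⟩

open SC in
/-- for `1/2 < α ≤ n/(2n−1)`, the conditions `x R_α y`,
`p_{xy} > 0 ∧ r_{xy} > r_{yx}`, `p_{xy} > p_{yx}`, and `x P_α y` are all equivalent;
in particular `R_α = P_α`. -/
theorem stmt10 {X : Type*} [Fintype X] {n : ℕ} (hn : 1 ≤ n)
    (R : Fin n → X → X → Prop) (hrefl : ∀ i, Reflexive (R i))
    (α : ℝ) (hα : 1 / 2 < α) (hα2 : α ≤ (n : ℝ) / (2 * (n : ℝ) - 1))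
    (x y : X) :
    (Rrel R α x y ↔ (0 < pp R x y ∧ rr R y x < rr R x y)) ∧
    ((0 < pp R x y ∧ rr R y x < rr R x y) ↔ pp R y x < pp R x y) ∧
    ((pp R y x < pp R x y) ↔ Prel R α x y) ∧
    (Rrel R α x y ↔ Prel R α x y) :=
  stmt10_general R α hα hα2 x y
end

section
/- Let R be a reflexive binary relation on a finite set X and let B and B' be components of R with B ∩ B' ≠ ∅ such that neither B ⊆ B' nor B' ⊆ B. Then B ∪ B' is a component of R; if moreover |B \ B'| ≥ 2, then B \ B' is a component of R; and if |B ∩ B'| ≥ 2 (for arbitrary components B, B', not necessarily incomparable), then B ∩ B' is a component of R. -/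
namespace SC

/-- `B` is a (generalized) component of a reflexive relation `R`: `|B| ≥ 2` and every
`x ∉ B` relates to all of `B` alike, in both directions. -/
def IsComponent {X : Type*} (R : X → X → Prop) (B : Set X) : Prop :=
  2 ≤ B.ncard ∧ ∀ x ∉ B,
    ((∃ y ∈ B, R x y) → ∀ y ∈ B, R x y) ∧ ((∃ y ∈ B, R y x) → ∀ y ∈ B, R y x)

end SC

section Aux

variable {X : Type*} (R : X → X → Prop)

private lemma union_fwd {B B' : Set X}
    (hB : ∀ x ∉ B, ((∃ y ∈ B, R x y) → ∀ y ∈ B, R x y) ∧ ((∃ y ∈ B, R y x) → ∀ y ∈ B, R y x))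
    (hB' : ∀ x ∉ B', ((∃ y ∈ B', R x y) → ∀ y ∈ B', R x y) ∧ ((∃ y ∈ B', R y x) → ∀ y ∈ B', R y x))
    {m : X} (hmB : m ∈ B) (hmB' : m ∈ B') :
    ∀ x ∉ B ∪ B', (∃ y ∈ B ∪ B', R x y) → ∀ y ∈ B ∪ B', R x y := by
  intro x hx hex y hy
  have hxB : x ∉ B := fun h => hx (Or.inl h)
  have hxB' : x ∉ B' := fun h => hx (Or.inr h)
  obtain ⟨y0, hy0, hR⟩ := hex
  have hxm : R x m := by
    rcases hy0 with h | h
    · exact (hB x hxB).1 ⟨y0, h, hR⟩ m hmB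
    · exact (hB' x hxB').1 ⟨y0, h, hR⟩ m hmB'
  rcases hy with h | h
  · exact (hB x hxB).1 ⟨m, hmB, hxm⟩ y h
  · exact (hB' x hxB').1 ⟨m, hmB', hxm⟩ y h

private lemma diff_fwd {B B' : Set X}
    (hB : ∀ x ∉ B, ((∃ y ∈ B, R x y) → ∀ y ∈ B, R x y) ∧ ((∃ y ∈ B, R y x) → ∀ y ∈ B, R y x))
    (hB' : ∀ x ∉ B', ((∃ y ∈ B', R x y) → ∀ y ∈ B', R x y) ∧ ((∃ y ∈ B', R y x) → ∀ y ∈ B', R y x))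
    (h2 : ¬ B' ⊆ B) :
    ∀ x ∉ B \ B', (∃ y ∈ B \ B', R x y) → ∀ y ∈ B \ B', R x y := by
  intro x hx hex z hz
  obtain ⟨y0, hy0, hR⟩ := hex
  by_cases hxB : x ∈ B
  · have hxB' : x ∈ B' := by
      by_contra h
      exact hx ⟨hxB, h⟩
    obtain ⟨u, huB', huB⟩ := Set.not_subset.mp h2
    have hA : ∀ w ∈ B', R w y0 := (hB' y0 hy0.2).2 ⟨x, hxB', hR⟩
    have hU : ∀ w ∈ B, R u w := (hB u huB).1 ⟨y0, hy0.1, hA u huB'⟩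
    have hZ : ∀ w ∈ B', R w z := (hB' z hz.2).2 ⟨u, huB', hU z hz.1⟩
    exact hZ x hxB'
  · exact (hB x hxB).1 ⟨y0, hy0.1, hR⟩ z hz.1

private lemma inter_fwd {B B' : Set X}
    (hB : ∀ x ∉ B, ((∃ y ∈ B, R x y) → ∀ y ∈ B, R x y) ∧ ((∃ y ∈ B, R y x) → ∀ y ∈ B, R y x))
    (hB' : ∀ x ∉ B', ((∃ y ∈ B', R x y) → ∀ y ∈ B', R x y) ∧ ((∃ y ∈ B', R y x) → ∀ y ∈ B', R y x))
    : ∀ x ∉ B ∩ B', (∃ y ∈ B ∩ B', R x y) → ∀ y ∈ B ∩ B', R x y := by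
  intro x hx hex y hy
  obtain ⟨y0, hy0, hR⟩ := hex
  by_cases hxB : x ∈ B
  · have hxB' : x ∉ B' := fun h => hx ⟨hxB, h⟩
    exact (hB' x hxB').1 ⟨y0, hy0.2, hR⟩ y hy.2
  · exact (hB x hxB).1 ⟨y0, hy0.1, hR⟩ y hy.1

private lemma swap_comp {B : Set X}
    (hB : ∀ x ∉ B, ((∃ y ∈ B, R x y) → ∀ y ∈ B, R x y) ∧ ((∃ y ∈ B, R y x) → ∀ y ∈ B, R y x)) :
    ∀ x ∉ B, ((∃ y ∈ B, (fun a b => R b a) x y) → ∀ y ∈ B, (fun a b => R b a) x y) ∧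
      ((∃ y ∈ B, (fun a b => R b a) y x) → ∀ y ∈ B, (fun a b => R b a) y x) :=
  fun x hx => ⟨(hB x hx).2, (hB x hx).1⟩

end Aux

open SC in
/-- if `B, B'` are intersecting, incomparable components of `R`, then
`B ∪ B'` is a component; if moreover `|B \ B'| ≥ 2`, then `B \ B'` is a component; and
for arbitrary components `B₁, B₂`, if `|B₁ ∩ B₂| ≥ 2` then `B₁ ∩ B₂` is a component. -/
theorem stmt11 {X : Type*} [Fintype X] (R : X → X → Prop) (hrefl : Reflexive R)
    (B B' : Set X) (hB : IsComponent R B) (hB' : IsComponent R B')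
    (hmeet : (B ∩ B').Nonempty) (h1 : ¬ B ⊆ B') (h2 : ¬ B' ⊆ B) :
    IsComponent R (B ∪ B') ∧
    (2 ≤ (B \ B').ncard → IsComponent R (B \ B')) ∧
    (∀ B₁ B₂ : Set X, IsComponent R B₁ → IsComponent R B₂ →
      2 ≤ (B₁ ∩ B₂).ncard → IsComponent R (B₁ ∩ B₂)) := by
  obtain ⟨hBc, hBp⟩ := hB
  obtain ⟨hB'c, hB'p⟩ := hB'
  obtain ⟨m, hmB, hmB'⟩ := hmeet
  refine ⟨⟨?_, ?_⟩, fun hc => ⟨hc, ?_⟩, ?_⟩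
  · exact le_trans hBc (Set.ncard_le_ncard Set.subset_union_left (Set.toFinite _))
  · intro x hx
    exact ⟨union_fwd R hBp hB'p hmB hmB' x hx,
      union_fwd (fun a b => R b a) (swap_comp R hBp) (swap_comp R hB'p) hmB hmB' x hx⟩
  · intro x hx
    exact ⟨diff_fwd R hBp hB'p h2 x hx,
      diff_fwd (fun a b => R b a) (swap_comp R hBp) (swap_comp R hB'p) h2 x hx⟩
  · intro B₁ B₂ hB₁ hB₂ hc
    refine ⟨hc, fun x hx => ?_⟩
    exact ⟨inter_fwd R hB₁.2 hB₂.2 x hx,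
      inter_fwd (fun a b => R b a) (swap_comp R hB₁.2) (swap_comp R hB₂.2) x hx⟩
end

section
/- Let (R_i), i = 1,…,n, be a profile of reflexive binary relations on a finite set X and let x, y ∈ X with x ≠ y. Then among all subsets B ⊆ X that contain x and y and are components of every R_i, there is a smallest one: a component B₀ of the profile with x, y ∈ B₀ such that B₀ ⊆ B for every subset B containing x and y that is a component of every R_i. (Note that X itself is such a component, so the family is nonempty.) -/
open SC in
/-- among the common components of a profile containing two given distinct
alternatives `x, y` there is a smallest one. -/
theorem stmt12 {X : Type*} [Fintype X] {n : ℕ} (hn : 1 ≤ n)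
    (R : Fin n → X → X → Prop) (hrefl : ∀ i, Reflexive (R i))
    (x y : X) (hxy : x ≠ y) :
    ∃ B₀ : Set X, (∀ i, IsComponent (R i) B₀) ∧ x ∈ B₀ ∧ y ∈ B₀ ∧
      ∀ B : Set X, (∀ i, IsComponent (R i) B) → x ∈ B → y ∈ B → B₀ ⊆ B := by
  classical
  set S : Set (Set X) := {B | (∀ i, IsComponent (R i) B) ∧ x ∈ B ∧ y ∈ B} with hS
  refine ⟨⋂₀ S, ?_, ?_, ?_, ?_⟩
  · intro i
    constructor
    · have hsub : ({x, y} : Set X) ⊆ ⋂₀ S := by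
        intro z hz B hB
        rcases hz with rfl | hz
        · exact hB.2.1
        · rw [Set.mem_singleton_iff] at hz; subst hz; exact hB.2.2
      have h2 : ({x, y} : Set X).ncard = 2 := Set.ncard_pair hxy
      calc 2 = ({x, y} : Set X).ncard := h2.symm
        _ ≤ (⋂₀ S).ncard := Set.ncard_le_ncard hsub (Set.toFinite _)
    · intro z hz
      rw [Set.mem_sInter] at hz
      push_neg at hz
      obtain ⟨B, hBS, hzB⟩ := hz
      have hinter : ⋂₀ S ⊆ B := Set.sInter_subset_of_mem hBS
      have hcomp := (hBS.1 i).2 z hzB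
      constructor
      · rintro ⟨w, hw, hRw⟩ v hv
        exact hcomp.1 ⟨w, hinter hw, hRw⟩ v (hinter hv)
      · rintro ⟨w, hw, hRw⟩ v hv
        exact hcomp.2 ⟨w, hinter hw, hRw⟩ v (hinter hv)
  · exact fun B hB => hB.2.1
  · exact fun B hB => hB.2.2
  · intro B hB hxB hyB
    exact Set.sInter_subset_of_mem ⟨hB, hxB, hyB⟩
end

section
/- Let S be a finite set, A a binary relation on S, x, y ∈ S, and let A' be a binary relation on S that differs from A at most by adding the pair (x,y) and/or removing the pair (y,x), i.e. A \ {(y,x)} ⊆ A' ⊆ A ∪ {(x,y)}. If x is tr_S(A)-optimal, then x is tr_S(A')-optimal. -/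
/-- if `A \ {(y,x)} ⊆ A' ⊆ A ∪ {(x,y)}` and `x` is `tr_S(A)`-optimal, then
`x` is `tr_S(A')`-optimal. -/
theorem stmt14 {S : Type*} [Fintype S] (A A' : S → S → Prop) (x y : S)
    (h1 : ∀ a b, A a b → ¬ (a = y ∧ b = x) → A' a b)
    (h2 : ∀ a b, A' a b → A a b ∨ (a = x ∧ b = y))
    (hopt : ∀ w, Relation.ReflTransGen A w x → Relation.ReflTransGen A x w) :
    ∀ w, Relation.ReflTransGen A' w x → Relation.ReflTransGen A' x w := by
  -- L1: A'-reachability of x implies A-reachability of x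
  have L1 : ∀ w, Relation.ReflTransGen A' w x → Relation.ReflTransGen A w x := by
    intro w h
    induction h using Relation.ReflTransGen.head_induction_on with
    | refl => exact Relation.ReflTransGen.refl
    | head hab _ ih =>
      rcases h2 _ _ hab with h | ⟨ha, hb⟩
      · exact Relation.ReflTransGen.head h ih
      · subst ha; exact Relation.ReflTransGen.refl
  -- L2: A-reachability from x implies A'-reachability from x
  have L2 : ∀ w, Relation.ReflTransGen A x w → Relation.ReflTransGen A' x w := by
    intro w h
    induction h with
    | refl => exact Relation.ReflTransGen.refl
    | @tail b c _ hbc ih =>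
      by_cases hc : b = y ∧ c = x
      · exact hc.2 ▸ Relation.ReflTransGen.refl
      · exact Relation.ReflTransGen.tail ih (h1 _ _ hbc hc)
  intro w hw
  exact L2 w (hopt w (L1 w hw))
end

section
/- Let S be a finite set, A a binary relation on S, x, y ∈ S, and let A' be a binary relation on S with A \ {(y,x)} ⊆ A' ⊆ A ∪ {(x,y)}. Suppose x is tr_S(A)-optimal and z ∈ S is not tr_S(A)-optimal (i.e. there is w ∈ S with w tr_S(A) z but not z tr_S(A) w). Then z is not tr_S(A')-optimal. -/
/-- if `A \ {(y,x)} ⊆ A' ⊆ A ∪ {(x,y)}`, `x` is `tr_S(A)`-optimal, and `z`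
is not `tr_S(A)`-optimal, then `z` is not `tr_S(A')`-optimal. -/
theorem stmt15 {S : Type*} [Fintype S] (A A' : S → S → Prop) (x y z : S)
    (h1 : ∀ a b, A a b → ¬ (a = y ∧ b = x) → A' a b)
    (h2 : ∀ a b, A' a b → A a b ∨ (a = x ∧ b = y))
    (hopt : ∀ w, Relation.ReflTransGen A w x → Relation.ReflTransGen A x w)
    (hz : ∃ w, Relation.ReflTransGen A w z ∧ ¬ Relation.ReflTransGen A z w) :
    ¬ ∀ w, Relation.ReflTransGen A' w z → Relation.ReflTransGen A' z w := by
  obtain ⟨w, hwz, hnzw⟩ := hz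
  -- claim 1: A'-paths decompose into A-paths
  have claim1 : ∀ a b, Relation.ReflTransGen A' a b →
      Relation.ReflTransGen A a b ∨
      (Relation.ReflTransGen A a x ∧ Relation.ReflTransGen A y b) := by
    intro a b h
    induction h with
    | refl => exact Or.inl .refl
    | @tail b c hab hbc ih =>
      rcases h2 _ _ hbc with hA | ⟨hb, hc⟩
      · rcases ih with h | ⟨h1', h2'⟩
        · exact Or.inl (h.tail hA)
        · exact Or.inr ⟨h1', h2'.tail hA⟩
      · subst hb; subst hc
        rcases ih with h | ⟨h1', h2'⟩
        · exact Or.inr ⟨h, .refl⟩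
        · exact Or.inr ⟨h1', .refl⟩
  -- claim 2: A-paths decompose into A'-paths
  have claim2 : ∀ a b, Relation.ReflTransGen A a b →
      Relation.ReflTransGen A' a b ∨
      (Relation.ReflTransGen A' a y ∧ Relation.ReflTransGen A' x b) := by
    intro a b h
    induction h with
    | refl => exact Or.inl .refl
    | @tail b c hab hbc ih =>
      by_cases hyx : b = y ∧ c = x
      · obtain ⟨hb, hc⟩ := hyx; subst hb; subst hc
        rcases ih with h | ⟨h1', h2'⟩
        · exact Or.inr ⟨h, .refl⟩
        · exact Or.inr ⟨h1', .refl⟩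
      · have hA' := h1 _ _ hbc hyx
        rcases ih with h | ⟨h1', h2'⟩
        · exact Or.inl (h.tail hA')
        · exact Or.inr ⟨h1', h2'.tail hA'⟩
  -- if z reaches x (in A), then z is A-optimal, contradiction
  have key : ¬ Relation.ReflTransGen A z x :=
    fun hzx => hnzw (hzx.trans (hopt w (hwz.trans hzx)))
  intro hopt'
  rcases claim2 _ _ hwz with hwz' | ⟨_, hxz'⟩
  · rcases claim1 _ _ (hopt' _ hwz') with h | ⟨h, _⟩
    · exact hnzw h
    · exact key h
  · rcases claim1 _ _ (hopt' _ hxz') with h | ⟨h, _⟩ <;> exact key h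
end

section
/- Let S be a nonempty finite set, m ≥ 1, and F_1 ⊆ F_2 ⊆ … ⊆ F_m a chain of reflexive binary relations on S such that either every F_k is antisymmetric or every F_k is complete. Suppose x ∈ S is such that for every y ∈ S \ {x} there is some k ∈ {1, …, m} with x F_k y and not y F_k x. Then the set of elements of S that are tr_S(F_k)-optimal for every k ∈ {1, …, m} equals {x}. -/
/-- for a chain `F_1 ⊆ … ⊆ F_m` of reflexive relations that are all
antisymmetric or all complete, if for every `y ≠ x` some `F_k` has `x F_k y` and
`¬ y F_k x`, then `x` is the unique common `tr_S(F_k)`-optimal element. -/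
theorem stmt16 {S : Type*} [Fintype S] [Nonempty S] {m : ℕ} (hm : 1 ≤ m)
    (F : Fin m → S → S → Prop)
    (hrefl : ∀ k, Reflexive (F k))
    (hchain : ∀ k l : Fin m, k ≤ l → ∀ a b, F k a b → F l a b)
    (hcase : (∀ k, AntiSymmetric (F k)) ∨ (∀ k, ∀ a b : S, F k a b ∨ F k b a))
    (x : S) (hx : ∀ y : S, y ≠ x → ∃ k, F k x y ∧ ¬ F k y x) :
    {z : S | ∀ (k : Fin m) (w : S),
        Relation.ReflTransGen (F k) w z → Relation.ReflTransGen (F k) z w} = {x} := by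
  have hdown : ∀ (y : S), y ≠ x →
      ∃ k : Fin m, (∀ l, l ≤ k → ¬ F l y x) ∧ (∀ l, k ≤ l → F l x y) := by
    intro y hy
    obtain ⟨k, h1, h2⟩ := hx y hy
    exact ⟨k, fun l hl h => h2 (hchain l k hl _ _ h), fun l hl => hchain k l hl _ _ h1⟩
  ext z
  simp only [Set.mem_setOf_eq, Set.mem_singleton_iff]
  constructor
  · intro hz
    by_contra hne
    obtain ⟨k, hk1, hk2⟩ : ∃ k : Fin m, F k x z ∧ ∀ y, F k y x → y = x := by
      rcases hcase with hanti | hcomp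
      · obtain ⟨k, hkz1, hkz2⟩ := hdown z hne
        refine ⟨k, hkz2 k le_rfl, ?_⟩
        intro y hyx
        by_contra hyne
        obtain ⟨l, hl1, hl2⟩ := hdown y hyne
        rcases le_total k l with h | h
        · exact hl1 k h hyx
        · exact hyne (hanti k hyx (hl2 k h))
      · have h0 : (0:ℕ) < m := hm
        refine ⟨⟨0, h0⟩, ?_, ?_⟩
        · obtain ⟨l, hl1, hl2⟩ := hdown z hne
          rcases hcomp ⟨0,h0⟩ x z with h | h
          · exact h
          · exact absurd h (hl1 ⟨0,h0⟩ (by simp [Fin.le_def]))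
        · intro y hyx
          by_contra hyne
          obtain ⟨l, hl1, hl2⟩ := hdown y hyne
          exact hl1 ⟨0,h0⟩ (by simp [Fin.le_def]) hyx
    have hzx : Relation.ReflTransGen (F k) z x :=
      hz k x (Relation.ReflTransGen.single hk1)
    have key : ∀ w : S, Relation.ReflTransGen (F k) w x → w = x := by
      intro w hw
      induction hw using Relation.ReflTransGen.head_induction_on with
      | refl => rfl
      | head h _ ih => exact hk2 _ (ih ▸ h)
    exact hne (key z hzx)
  · intro hzx0
    subst hzx0
    intro k w hw
    rcases hcase with hanti | hcomp
    · have : w = z := by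
        induction hw using Relation.ReflTransGen.head_induction_on with
        | refl => rfl
        | head h _ ih =>
          subst ih
          by_contra hne
          obtain ⟨l, hl1, hl2⟩ := hdown _ hne
          rcases le_total k l with hkl | hlk
          · exact hl1 k hkl h
          · exact hne (hanti k h (hl2 k hlk))
      exact this ▸ Relation.ReflTransGen.refl
    · refine Relation.ReflTransGen.single ?_
      by_cases hw' : w = z
      · exact hw' ▸ hrefl k w
      · obtain ⟨l, hl1, hl2⟩ := hdown w hw'
        rcases le_total k l with hkl | hlk
        · rcases hcomp k z w with h | h
          · exact h
          · exact absurd h (hl1 k hkl)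
        · exact hl2 k hlk
end
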